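/- arXiv:2205.13582 — 2 statements merged into one kernel-verified Lean document; each statement's English description precedes it below -/
import Mathlib

section
/- Let n ≥ 5, q = 2n+1, g = 2n-2, and let A be the cyclic subgroup of (Z/qZ)² generated by (1, g). Then the minimum Mannheim weight of a nonzero element of A equals 4, where the Mannheim weight of (x,y) ∈ (Z/qZ)² is |x̃| + |ỹ| with x̃, ỹ the representatives of x, y in the interval (-q/2, q/2]. -/
/-!
Every element of `A` has the form `(x, -3x)`, since `2n - 2 ≡ -3 (mod 2n + 1)`. If `a` and `b`
are the centred representatives of `x` and `-3x`, then `b ≡ -3a`, and a weight `|a| + |b| ≤ 3`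
would force `|b + 3a| ≤ 9 < q`, hence `b = -3a` and weight `4|a|`, which is `0` or at least `4`.
-/

namespace ZMod

variable {q : ℕ}

theorem natCast_sub_of_le {a : ℕ} (h : a ≤ q) : ((q - a : ℕ) : ZMod q) = -a := by
  rw [Nat.cast_sub h, natCast_self, zero_sub]

def mannheimWeight (x : ZMod q × ZMod q) : ℤ :=
  |x.1.valMinAbs| + |x.2.valMinAbs|

theorem valMinAbs_intCast_mul_of_lt (c : ℤ) (x : ZMod q)
    (h : |((c : ZMod q) * x).valMinAbs| + |c| * |x.valMinAbs| < q) :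
    ((c : ZMod q) * x).valMinAbs = c * x.valMinAbs := by
  rw [← sub_eq_zero]
  apply Int.eq_zero_of_abs_lt_dvd (m := q)
  · rw [← intCast_zmod_eq_zero_iff_dvd]
    push_cast [coe_valMinAbs]
    ring
  · calc |((c : ZMod q) * x).valMinAbs - c * x.valMinAbs|
        ≤ |((c : ZMod q) * x).valMinAbs| + |c * x.valMinAbs| := abs_sub _ _
      _ < q := by rwa [abs_mul]

theorem one_add_abs_le_mannheimWeight {c : ℤ} (hc : c ^ 2 < q) {x : ZMod q} (hx : x ≠ 0) :
    1 + |c| ≤ mannheimWeight (x, (c : ZMod q) * x) := by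
  have ha : 1 ≤ |x.valMinAbs| := Int.one_le_abs ((valMinAbs_eq_zero x).not.mpr hx)
  by_contra! hw
  simp only [mannheimWeight] at hw
  have hb := abs_nonneg ((c : ZMod q) * x).valMinAbs
  have hsmall : |((c : ZMod q) * x).valMinAbs| + |c| * |x.valMinAbs| < q := by
    nlinarith [sq_abs c]
  rw [valMinAbs_intCast_mul_of_lt c x hsmall, abs_mul] at hw
  nlinarith [mul_nonneg (sub_nonneg.mpr ha) (abs_nonneg c)]

end ZMod

/-- Let `n ≥ 5`, `q = 2n+1`, `g = 2n-2`, and let `A` be the cyclic subgroup of `(ℤ/qℤ)²`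
generated by `(1, g)`. Then the minimum Mannheim weight of a nonzero element of `A`
equals `4`, where the Mannheim weight of `(x,y)` is `|x̃| + |ỹ|` with `x̃, ỹ` the
representatives in `(-q/2, q/2]` (given by `ZMod.valMinAbs`). -/
theorem stmt_6 (n : ℕ) (hn : 5 ≤ n) :
    IsLeast {w : ℤ | ∃ x : ZMod (2*n+1) × ZMod (2*n+1),
      x ∈ AddSubgroup.zmultiples
        (((1 : ZMod (2*n+1)), ((2*n-2 : ℕ) : ZMod (2*n+1))) :
          ZMod (2*n+1) × ZMod (2*n+1)) ∧
      x ≠ 0 ∧ w = |x.1.valMinAbs| + |x.2.valMinAbs|} 4 := by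
  have hg : ((2*n-2 : ℕ) : ZMod (2*n+1)) = ((-3 : ℤ) : ZMod (2*n+1)) := by
    rw [show 2*n-2 = (2*n+1) - 3 by omega, ZMod.natCast_sub_of_le (by omega)]
    push_cast
    rfl
  have : Fact (1 < 2*n+1) := ⟨by omega⟩
  constructor
  · refine ⟨(1, _), AddSubgroup.mem_zmultiples _, fun h => one_ne_zero (congrArg Prod.fst h), ?_⟩
    have h1 : ((1 : ℕ) : ZMod (2*n+1)).valMinAbs = 1 := ZMod.valMinAbs_natCast_of_le_half (by omega)
    have h2 : ((2*n-2 : ℕ) : ZMod (2*n+1)).valMinAbs = -3 := by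
      rw [ZMod.valMinAbs_natCast_of_half_lt (by omega) (by omega)]
      omega
    simp only [← Nat.cast_one (R := ZMod (2*n+1)), h1, h2]
    norm_num
  · rintro w ⟨x, hx, hx0, rfl⟩
    obtain ⟨k, rfl⟩ := AddSubgroup.mem_zmultiples_iff.mp hx
    have hgraph : k • ((1 : ZMod (2*n+1)), ((2*n-2 : ℕ) : ZMod (2*n+1))) =
        ((k : ZMod (2*n+1)), ((-3 : ℤ) : ZMod (2*n+1)) * k) := by
      rw [hg]
      ext <;> simp [mul_comm]
    rw [hgraph] at hx0 ⊢
    have hk : (k : ZMod (2*n+1)) ≠ 0 := fun h => hx0 (by simp [h])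
    have hc : (-3 : ℤ) ^ 2 < ((2*n+1 : ℕ) : ℤ) := by push_cast; omega
    simpa [ZMod.mannheimWeight] using ZMod.one_add_abs_le_mannheimWeight hc hk
end

section
/- Let n ≥ 3, q = 2n+1, g = 2n-2 = 3q' + r (0 ≤ r ≤ 2). Among all elements (c, d) of A = ⟨(1,g)⟩ ⊆ (Z/qZ)² whose centered representative has |c̃| = 1, the minimum Mannheim weight is exactly 4, attained by (1, -3). -/
/-! The generator `(1, 2n - 2)` equals `(1, -3)` in `(ℤ/(2n+1)ℤ)²`, so the cyclic group is
`{(c, -3c)}`. If `|c̃| = 1` then `c = ±1`, hence `d = ∓3`, and since `3 < q / 2` every such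
element has Mannheim weight exactly `1 + 3 = 4`. -/

namespace ZMod

variable {q : ℕ}

theorem eq_one_or_eq_neg_one_of_abs_valMinAbs_eq_one {x : ZMod q} (h : |x.valMinAbs| = 1) :
    x = 1 ∨ x = -1 := by
  rw [← x.coe_valMinAbs]
  rcases abs_eq zero_le_one |>.mp h with h | h <;> simp [h]

theorem abs_valMinAbs_mul_of_abs_valMinAbs_eq_one {x : ZMod q} (c : ZMod q)
    (h : |x.valMinAbs| = 1) : |(c * x).valMinAbs| = |c.valMinAbs| := by
  refine abs_valMinAbs_eq_abs_valMinAbs.mpr ?_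
  rcases eq_one_or_eq_neg_one_of_abs_valMinAbs_eq_one h with rfl | rfl <;> simp

theorem valMinAbs_one (hq : 2 ≤ q) : (1 : ZMod q).valMinAbs = 1 := by
  simpa using valMinAbs_natCast_of_le_half (n := q) (a := 1) (by omega)

theorem abs_valMinAbs_neg_three (hq : 6 ≤ q) : |(-3 : ZMod q).valMinAbs| = 3 := by
  have h3 : (3 : ZMod q).valMinAbs = 3 := by
    simpa using valMinAbs_natCast_of_le_half (n := q) (a := 3) (by omega)
  rw [abs_valMinAbs_eq_abs_valMinAbs.mpr (Or.inr rfl), h3, abs_of_pos three_pos]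

theorem natCast_two_mul_sub_two {n : ℕ} (hn : 1 ≤ n) :
    ((2 * n - 2 : ℕ) : ZMod (2 * n + 1)) = -3 := by
  refine eq_neg_of_add_eq_zero_left ?_
  have h : ((2 * n - 2 + 3 : ℕ) : ZMod (2 * n + 1)) = 0 := by
    rw [show 2 * n - 2 + 3 = 2 * n + 1 by omega, natCast_self]
  simpa using h

end ZMod

theorem Prod.snd_eq_mul_fst_of_mem_zmultiples {R : Type*} [Ring R] {a : R} {x : R × R}
    (hx : x ∈ AddSubgroup.zmultiples ((1, a) : R × R)) : x.2 = a * x.1 := by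
  obtain ⟨k, rfl⟩ := AddSubgroup.mem_zmultiples_iff.mp hx
  simp [zsmul_eq_mul, Int.cast_comm]

/-- Let `n ≥ 3`, `q = 2n+1`, `g = 2n-2`. Among all elements `(c, d)` of
`A = ⟨(1,g)⟩ ⊆ (ℤ/qℤ)²` whose centered representative has `|c̃| = 1`, the minimum
Mannheim weight is exactly `4`, attained by `(1, -3)`. -/
theorem stmt_18 (n : ℕ) (hn : 3 ≤ n) :
    IsLeast {w : ℤ | ∃ x : ZMod (2*n+1) × ZMod (2*n+1),
      x ∈ AddSubgroup.zmultiples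
        (((1 : ZMod (2*n+1)), ((2*n-2 : ℕ) : ZMod (2*n+1))) :
          ZMod (2*n+1) × ZMod (2*n+1)) ∧
      |x.1.valMinAbs| = 1 ∧ w = |x.1.valMinAbs| + |x.2.valMinAbs|} 4 ∧
    (((1 : ZMod (2*n+1)), (-3 : ZMod (2*n+1))) ∈
      AddSubgroup.zmultiples
        (((1 : ZMod (2*n+1)), ((2*n-2 : ℕ) : ZMod (2*n+1))) :
          ZMod (2*n+1) × ZMod (2*n+1))) ∧
    |(1 : ZMod (2*n+1)).valMinAbs| + |(-3 : ZMod (2*n+1)).valMinAbs| = 4 := by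
  rw [ZMod.natCast_two_mul_sub_two (by omega)]
  have hmem := AddSubgroup.mem_zmultiples ((1, -3) : ZMod (2*n+1) × ZMod (2*n+1))
  have hone : |(1 : ZMod (2*n+1)).valMinAbs| = 1 := by rw [ZMod.valMinAbs_one (by omega), abs_one]
  have hweight : |(1 : ZMod (2*n+1)).valMinAbs| + |(-3 : ZMod (2*n+1)).valMinAbs| = 4 := by
    rw [hone, ZMod.abs_valMinAbs_neg_three (by omega)]
    norm_num
  refine ⟨⟨⟨(1, -3), hmem, hone, hweight.symm⟩, ?_⟩, hmem, hweight⟩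
  rintro w ⟨x, hx, hx1, rfl⟩
  rw [Prod.snd_eq_mul_fst_of_mem_zmultiples hx,
    ZMod.abs_valMinAbs_mul_of_abs_valMinAbs_eq_one _ hx1, hx1,
    ZMod.abs_valMinAbs_neg_three (by omega)]
  norm_num
end
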